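/- arXiv:1403.2344 — 2 statements merged into one kernel-verified Lean document; each statement's English description precedes it below -/
import Mathlib

section
/- For n ≥ 1 and r ∈ [n-1], any intersecting subfamily of the family of r-partial permutations P_{n,r,n} has size at most C(n-1, r-1)·(n-1)!/(n-r)!, and this bound is attained by every star. -/
open Finset

/-- The set of `r` cyclically consecutive residues modulo `m`, starting at `s`. -/
def cyc (m s r : ℕ) : Finset ℕ := (Finset.range r).image fun i => (s + i) % m

/-- `A` meets the cyclic ordering `σ`: the `σ`-values of the elements of `A` are
consecutive in the cyclic sense modulo `m`. -/
def Meets {α : Type*} [DecidableEq α] (m : ℕ) (σ : α → ℕ) (A : Finset α) : Prop :=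
  ∃ s : ℕ, A.image (fun a => σ a % m) = cyc m s A.card

/-- A family of sets is intersecting if every two of its members intersect. -/
def Intersecting {β : Type*} [DecidableEq β] (𝒜 : Finset (Finset β)) : Prop :=
  ∀ A ∈ 𝒜, ∀ B ∈ 𝒜, (A ∩ B).Nonempty

/-- The family `𝒫_{k,r,n}` of generalised permutations: all `r`-subsets of
`[k] × [n]` with pairwise distinct first coordinates and pairwise distinct
second coordinates. -/
def genPerms (k r n : ℕ) : Finset (Finset (ℕ × ℕ)) :=
  (Finset.Icc 1 k ×ˢ Finset.Icc 1 n).powerset.filter fun A =>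
    A.card = r ∧ (∀ p ∈ A, ∀ q ∈ A, p.1 = q.1 → p = q) ∧
      (∀ p ∈ A, ∀ q ∈ A, p.2 = q.2 → p = q)

/-- The representative of `a` modulo `n` lying in `{1, …, n}`. -/
def mod1 (a : ℤ) (n : ℕ) : ℕ := ((a - 1) % (n : ℤ) + 1).toNat

/-- The cyclic ordering `τ(x,y) = k·((y - x) mod' n) + x`. -/
def tau (k n : ℕ) (p : ℕ × ℕ) : ℕ := k * mod1 ((p.2 : ℤ) - (p.1 : ℤ)) n + p.1

/-- `σ` is an `r`-good cyclic ordering of `[k] × [n]`: any `r` elements numbered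
consecutively in the cyclic sense by `σ` form a generalised permutation, i.e. they
have pairwise distinct first coordinates and pairwise distinct second coordinates. -/
def IsGood (k n r : ℕ) (σ : ℕ × ℕ → ℕ) : Prop :=
  ∀ A : Finset (ℕ × ℕ), A ⊆ Finset.Icc 1 k ×ˢ Finset.Icc 1 n → A.card = r →
    Meets (k * n) σ A → A ∈ genPerms k r n

/-- A permutation of `Fin k` regarded as a permutation of `[k] = {1, …, k} ⊆ ℕ`. -/
def liftPerm (k : ℕ) (φ : Equiv.Perm (Fin k)) (x : ℕ) : ℕ :=
  if h : 1 ≤ x ∧ x - 1 < k then (φ ⟨x - 1, h.2⟩).val + 1 else x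

/-- The cyclic ordering `τ_{φ,ψ}(x,y) = τ(φ⁻¹(x), ψ⁻¹(y))`. -/
def tauPerm (k n : ℕ) (φ : Equiv.Perm (Fin k)) (ψ : Equiv.Perm (Fin n)) (p : ℕ × ℕ) : ℕ :=
  tau k n (liftPerm k φ.symm p.1, liftPerm n ψ.symm p.2)


namespace EKRaux


lemma liftPerm_eval {n : ℕ} (φ : Equiv.Perm (Fin n)) {x : ℕ} (h1 : 1 ≤ x) (h2 : x ≤ n) :
    liftPerm n φ x = (φ ⟨x - 1, by omega⟩).val + 1 := by
  unfold liftPerm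
  rw [dif_pos ⟨h1, by omega⟩]

lemma liftPerm_mem {n : ℕ} (φ : Equiv.Perm (Fin n)) {x : ℕ} (hx : x ∈ Finset.Icc 1 n) :
    liftPerm n φ x ∈ Finset.Icc 1 n := by
  simp only [Finset.mem_Icc] at hx ⊢
  rw [liftPerm_eval φ hx.1 hx.2]
  have := (φ ⟨x - 1, by omega⟩).isLt
  omega

lemma liftPerm_not_mem {n : ℕ} (φ : Equiv.Perm (Fin n)) {x : ℕ} (hx : x ∉ Finset.Icc 1 n) :
    liftPerm n φ x = x := by
  simp only [Finset.mem_Icc] at hx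
  unfold liftPerm
  rw [dif_neg (by omega)]

lemma liftPerm_inj {n : ℕ} (φ : Equiv.Perm (Fin n)) : Function.Injective (liftPerm n φ) := by
  intro x y hxy
  by_cases hx : x ∈ Finset.Icc 1 n <;> by_cases hy : y ∈ Finset.Icc 1 n
  · simp only [Finset.mem_Icc] at hx hy
    rw [liftPerm_eval φ hx.1 hx.2, liftPerm_eval φ hy.1 hy.2] at hxy
    have : φ ⟨x - 1, by omega⟩ = φ ⟨y - 1, by omega⟩ := Fin.ext (by omega)
    have := φ.injective this
    have := Fin.mk.injEq (x-1) (by omega : x - 1 < n) (y-1) (by omega) ▸ this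
    omega
  · have h1 := liftPerm_mem φ hx
    rw [liftPerm_not_mem φ hy] at hxy
    exact absurd (hxy ▸ h1) hy
  · have h1 := liftPerm_mem φ hy
    rw [liftPerm_not_mem φ hx] at hxy
    exact absurd (hxy.symm ▸ h1) hx
  · rwa [liftPerm_not_mem φ hx, liftPerm_not_mem φ hy] at hxy



lemma mod1_bounds {n : ℕ} (a : ℤ) (hn : 1 ≤ n) : 1 ≤ mod1 a n ∧ mod1 a n ≤ n := by
  unfold mod1
  have h1 : (0:ℤ) ≤ (a - 1) % (n:ℤ) := Int.emod_nonneg _ (by exact_mod_cast Nat.one_le_iff_ne_zero.mp hn)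
  have h2 : (a - 1) % (n:ℤ) < (n:ℤ) := Int.emod_lt_of_pos _ (by exact_mod_cast hn)
  omega

lemma mod1_cast {n : ℕ} (a : ℤ) (hn : 1 ≤ n) : (mod1 a n : ℤ) = (a - 1) % (n:ℤ) + 1 := by
  unfold mod1
  have h1 : (0:ℤ) ≤ (a - 1) % (n:ℤ) := Int.emod_nonneg _ (by exact_mod_cast Nat.one_le_iff_ne_zero.mp hn)
  omega

lemma mod1_dvd {n : ℕ} (a : ℤ) (hn : 1 ≤ n) : (n:ℤ) ∣ ((mod1 a n : ℤ) - a) := by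
  rw [mod1_cast a hn]
  refine ⟨-((a-1)/(n:ℤ)), ?_⟩
  have h := Int.emod_def (a - 1) (n:ℤ)
  linarith [h]

/-- Key structural facts about `tau` differences. -/
lemma tau_facts {n : ℕ} (hn : 1 ≤ n) {p q : ℕ × ℕ}
    (hp : p ∈ Finset.Icc 1 n ×ˢ Finset.Icc 1 n) (hq : q ∈ Finset.Icc 1 n ×ˢ Finset.Icc 1 n) :
    ∃ a b : ℤ, (tau n n q : ℤ) - tau n n p = n * a + b ∧
      -( (n:ℤ) - 1) ≤ a ∧ a ≤ (n:ℤ) - 1 ∧ b = (q.1 : ℤ) - p.1 ∧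
      (n:ℤ) ∣ (a - (((q.2:ℤ) - q.1) - ((p.2:ℤ) - p.1))) ∧
      (a = 0 → b = 0 → p = q) := by
  simp only [Finset.mem_product, Finset.mem_Icc] at hp hq
  have hbp := mod1_bounds ((p.2 : ℤ) - p.1) hn
  have hbq := mod1_bounds ((q.2 : ℤ) - q.1) hn
  have h1 := mod1_dvd ((p.2 : ℤ) - p.1) hn
  have h2 := mod1_dvd ((q.2 : ℤ) - q.1) hn
  refine ⟨(mod1 ((q.2 : ℤ) - q.1) n : ℤ) - mod1 ((p.2 : ℤ) - p.1) n, (q.1 : ℤ) - p.1,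
    ?_, by omega, by omega, rfl, ?_, ?_⟩
  · unfold tau
    push_cast
    ring
  · have h3 := dvd_sub h2 h1
    convert h3 using 1
    exacts [rfl, by ring]
  · intro ha hb
    have hx : p.1 = q.1 := by omega
    obtain ⟨c1, hc1⟩ := h1
    obtain ⟨c2, hc2⟩ := h2
    have h3 : (q.2 : ℤ) - p.2 = (n:ℤ) * (c1 - c2) := by
      have hdd : (mod1 ((q.2 : ℤ) - q.1) n : ℤ) = mod1 ((p.2 : ℤ) - p.1) n := by omega
      have hx' : (p.1 : ℤ) = q.1 := by exact_mod_cast hx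
      rw [hdd] at hc2
      linear_combination hc1 - hc2 - hx'
    have hy : p.2 = q.2 := by
      have hb1 : (1:ℤ) ≤ (q.2:ℤ) := by exact_mod_cast hq.2.1
      have hb2 : ((q.2:ℤ)) ≤ n := by exact_mod_cast hq.2.2
      have hb3 : (1:ℤ) ≤ (p.2:ℤ) := by exact_mod_cast hp.2.1
      have hb4 : ((p.2:ℤ)) ≤ n := by exact_mod_cast hp.2.2
      have hcc : c1 - c2 = 0 := by
        rcases lt_trichotomy (c1 - c2) 0 with h | h | h
        · nlinarith
        · exact h
        · nlinarith
      rw [hcc, mul_zero] at h3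
      omega
    exact Prod.ext hx hy

lemma tau_mem_range {n : ℕ} (hn : 1 ≤ n) {p : ℕ × ℕ}
    (hp : p ∈ Finset.Icc 1 n ×ˢ Finset.Icc 1 n) :
    n + 1 ≤ tau n n p ∧ tau n n p ≤ n * n + n := by
  simp only [Finset.mem_product, Finset.mem_Icc] at hp
  have hb := mod1_bounds ((p.2 : ℤ) - p.1) hn
  unfold tau
  constructor
  · nlinarith [hp.1.1]
  · nlinarith [hp.1.2]

lemma int_bound3 {n c : ℤ} (hn : 2 ≤ n) (h : -(n*n + n) ≤ n*n*c ∧ n*n*c ≤ n*n + n) :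
    c = -1 ∨ c = 0 ∨ c = 1 := by
  rcases lt_trichotomy c 0 with h' | h' | h'
  · left
    by_contra hne
    have h2 : c ≤ -2 := by omega
    have h3 : n*n*c ≤ n*n*(-2) := by nlinarith
    nlinarith
  · right; left; exact h'
  · right; right
    by_contra hne
    have h2 : 2 ≤ c := by omega
    have h3 : n*n*2 ≤ n*n*c := by nlinarith
    nlinarith

lemma int_case1 {n a e t : ℤ} (hn : 2 ≤ n) (ha1 : -(n-1) ≤ a) (ha2 : a ≤ n-1)
    (he1 : -(n-2) ≤ e) (he2 : e ≤ n-2) (ht : n*a = e - (n*n)*t) : a = 0 := by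
  have hna1 : -(n*n - n) ≤ n*a := by nlinarith
  have hna2 : n*a ≤ n*n - n := by nlinarith
  have ht3 : t = -1 ∨ t = 0 ∨ t = 1 := by
    refine int_bound3 hn ⟨?_, ?_⟩ <;> nlinarith
  rcases ht3 with h | h | h <;> subst h
  · exfalso; nlinarith
  · have hae : n*a = e := by linarith
    rcases lt_trichotomy a 0 with h' | h' | h'
    · exfalso; nlinarith
    · exact h'
    · exfalso; nlinarith
  · exfalso; nlinarith

lemma int_case2 {n a b e t : ℤ} (hn : 2 ≤ n) (ha1 : -(n-1) ≤ a) (ha2 : a ≤ n-1)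
    (hb1 : -(n-1) ≤ b) (hb2 : b ≤ n-1) (he1 : -(n-2) ≤ e) (he2 : e ≤ n-2)
    (hab : n ∣ (a + b)) (ht : n*a + b = e - (n*n)*t) : a = 0 ∧ b = 0 := by
  obtain ⟨u, hu⟩ := hab
  have hu3 : u = -1 ∨ u = 0 ∨ u = 1 := by
    rcases lt_trichotomy u 0 with h' | h' | h'
    · left
      by_contra hne
      have h2 : u ≤ -2 := by omega
      have h3 : n*u ≤ n*(-2) := by nlinarith
      nlinarith
    · right; left; exact h'
    · right; right
      by_contra hne
      have h2 : 2 ≤ u := by omega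
      have h3 : n*2 ≤ n*u := by nlinarith
      nlinarith
  have hnu : n*(a+b) = n*(n*u) := by rw [hu]
  have hkey : (n-1) * b = n*n*(u + t) - e := by linear_combination hnu - ht
  have hblb : -((n-1)*(n-1)) ≤ (n-1)*b := by nlinarith
  have hbub : (n-1)*b ≤ (n-1)*(n-1) := by nlinarith
  have hut : u + t = 0 := by
    by_contra hne
    rcases lt_or_gt_of_ne hne with h | h
    · have h1' : u + t ≤ -1 := by omega
      have : n*n*(u+t) ≤ n*n*(-1) := by nlinarith
      nlinarith
    · have h1' : 1 ≤ u + t := by omega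
      have : n*n*1 ≤ n*n*(u+t) := by nlinarith
      nlinarith
  rw [hut, mul_zero, zero_sub] at hkey
  have hb0 : b = 0 := by
    rcases lt_trichotomy b 0 with h | h | h
    · exfalso; nlinarith
    · exact h
    · exfalso; nlinarith
  refine ⟨?_, hb0⟩
  rw [hb0, add_zero] at hu
  rcases hu3 with h | h | h <;> subst h <;> rw [hu]
  · exfalso; rw [hu] at ha1; nlinarith
  · ring
  · exfalso; rw [hu] at ha2; nlinarith

/-- Goodness / injectivity core. -/
lemma tau_core {n r : ℕ} (hn : 2 ≤ n) (hr : r ≤ n - 1) {p q : ℕ × ℕ}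
    (hp : p ∈ Finset.Icc 1 n ×ˢ Finset.Icc 1 n) (hq : q ∈ Finset.Icc 1 n ×ˢ Finset.Icc 1 n)
    {s i j : ℕ} (hi : i < r) (hj : j < r)
    (hpi : tau n n p % (n*n) = (s+i) % (n*n)) (hqj : tau n n q % (n*n) = (s+j) % (n*n)) :
    (p.1 = q.1 ∨ p.2 = q.2) → p = q := by
  intro hcase
  obtain ⟨a, b, hD, ha1, ha2, hb, hdvd, hfin⟩ := tau_facts (by omega) hp hq
  have hn' : (2:ℤ) ≤ (n:ℤ) := by exact_mod_cast hn
  have hM : ((n:ℤ)*n) = ((n*n : ℕ) : ℤ) := by push_cast; ring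
  have h1 : ((tau n n p : ℤ)) % ((n:ℤ)*n) = ((s+i : ℕ) : ℤ) % ((n:ℤ)*n) := by
    rw [hM, ← Int.natCast_mod, ← Int.natCast_mod, hpi]
  have h2 : ((tau n n q : ℤ)) % ((n:ℤ)*n) = ((s+j : ℕ) : ℤ) % ((n:ℤ)*n) := by
    rw [hM, ← Int.natCast_mod, ← Int.natCast_mod, hqj]
  have hsub : Int.ModEq ((n:ℤ)*n) ((tau n n q : ℤ) - tau n n p) (((s+j:ℕ) : ℤ) - ((s+i:ℕ) : ℤ)) :=
    Int.ModEq.sub h2 h1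
  obtain ⟨t, ht0⟩ := hsub.dvd
  have ht : (n:ℤ)*a + b = ((j:ℤ) - i) - ((n:ℤ)*n) * t := by
    rw [hD] at ht0
    push_cast at ht0
    linarith
  have hpq := hp
  have hqq := hq
  simp only [Finset.mem_product, Finset.mem_Icc] at hpq hqq
  have hbb1 : -((n:ℤ)-1) ≤ b := by rw [hb]; push_cast; omega
  have hbb2 : b ≤ (n:ℤ)-1 := by rw [hb]; push_cast; omega
  have he1 : -((n:ℤ)-2) ≤ (j:ℤ) - i := by push_cast; omega
  have he2 : (j:ℤ) - i ≤ (n:ℤ)-2 := by push_cast; omega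
  rcases hcase with hx | hy
  · have hb0 : b = 0 := by rw [hb]; push_cast; omega
    rw [hb0, add_zero] at ht
    have ha0 : a = 0 := int_case1 hn' ha1 ha2 he1 he2 ht
    exact hfin ha0 hb0
  · have hyx : (q.2 : ℤ) = p.2 := by exact_mod_cast congrArg (Nat.cast : ℕ → ℤ) hy.symm
    have hab : (n:ℤ) ∣ (a + b) := by
      obtain ⟨c, hc⟩ := hdvd
      refine ⟨c, ?_⟩
      rw [hb]
      rw [hyx] at hc
      linarith
    obtain ⟨ha0, hb0⟩ := int_case2 hn' ha1 ha2 hbb1 hbb2 he1 he2 hab ht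
    exact hfin ha0 hb0



lemma mem_cyc {m s r u : ℕ} : u ∈ cyc m s r ↔ ∃ i < r, (s + i) % m = u := by
  simp [cyc, Finset.mem_image, Finset.mem_range]

lemma card_cyc {m s r : ℕ} (hm : 0 < m) (hr : r ≤ m) : (cyc m s r).card = r := by
  rw [cyc, Finset.card_image_of_injOn, Finset.card_range]
  intro i hi j hj hij
  simp only [Finset.coe_range, Set.mem_Iio] at hi hj
  have h1 : (s + i) ≡ (s + j) [MOD m] := hij
  have h2 : i ≡ j [MOD m] := (Nat.ModEq.add_left_cancel' s h1)
  have := h2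
  unfold Nat.ModEq at this
  rwa [Nat.mod_eq_of_lt (lt_of_lt_of_le hi hr), Nat.mod_eq_of_lt (lt_of_lt_of_le hj hr)] at this

lemma int_mul_cases {m c x : ℤ} (hm : 0 < m) (h : x = m * c) (h1 : -m < x) (h2 : x < 2*m) :
    x = 0 ∨ x = m := by
  rcases lt_trichotomy c 0 with h' | h' | h'
  · exfalso
    have : c ≤ -1 := by omega
    nlinarith
  · left; rw [h, h', mul_zero]
  · have : c = 1 ∨ 2 ≤ c := by omega
    rcases this with h'' | h''
    · right; rw [h, h'', mul_one]
    · exfalso; nlinarith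

lemma int_no_middle {m x : ℤ} (hm : 0 < m) (hdvd : m ∣ x) (h1 : 0 < x) (h2 : x < m) : False := by
  obtain ⟨c, hc⟩ := hdvd
  rcases lt_trichotomy c 0 with h' | h' | h'
  · have : c ≤ -1 := by omega
    nlinarith
  · rw [h', mul_zero] at hc; omega
  · have : 1 ≤ c := by omega
    nlinarith

/-- Katona's circle lemma: pairwise-intersecting arcs of length `r` on a cycle of
length `m ≥ 2r` number at most `r`. -/
lemma katona {m r : ℕ} (hr : 1 ≤ r) (h2r : 2*r ≤ m) {S : Finset ℕ}
    (hS : S ⊆ Finset.range m)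
    (hint : ∀ s ∈ S, ∀ t ∈ S, ((cyc m s r) ∩ (cyc m t r)).Nonempty) : S.card ≤ r := by
  rcases S.eq_empty_or_nonempty with rfl | ⟨s0, hs0⟩
  · simp
  have hm : 0 < m := by omega
  have hs0m : s0 < m := Finset.mem_range.mp (hS hs0)
  set δ : ℕ → ℕ := fun t => (t + m - s0) % m with hδ
  have hδlt : ∀ t, δ t < m := fun t => Nat.mod_lt _ hm
  have hδinj : ∀ t ∈ S, ∀ u ∈ S, δ t = δ u → t = u := by
    intro t ht u hu h
    have htm : t < m := Finset.mem_range.mp (hS ht)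
    have hum : u < m := Finset.mem_range.mp (hS hu)
    have h2 : (t + m - s0) + s0 ≡ (u + m - s0) + s0 [MOD m] := Nat.ModEq.add_right s0 h
    rw [show t + m - s0 + s0 = t + m by omega, show u + m - s0 + s0 = u + m by omega] at h2
    have h3 : t ≡ u [MOD m] := by
      have := Nat.ModEq.add_right_cancel' m h2
      exact this
    have h4 := h3
    unfold Nat.ModEq at h4
    rwa [Nat.mod_eq_of_lt htm, Nat.mod_eq_of_lt hum] at h4
  have hδrep : ∀ t, s0 + δ t ≡ t [MOD m] := by
    intro t
    have h1 : s0 + δ t ≡ s0 + (t + m - s0) [MOD m] := Nat.ModEq.add_left s0 (Nat.mod_modEq _ m)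
    rw [show s0 + (t + m - s0) = t + m by omega] at h1
    exact h1.trans (by unfold Nat.ModEq; rw [Nat.add_mod_right])
  -- claim C1
  have C1 : ∀ t ∈ S, δ t < r ∨ m - r + 1 ≤ δ t := by
    intro t ht
    obtain ⟨v, hv⟩ := hint s0 hs0 t ht
    rw [Finset.mem_inter] at hv
    obtain ⟨i, hi, hvi⟩ := mem_cyc.mp hv.1
    obtain ⟨j, hj, hvj⟩ := mem_cyc.mp hv.2
    have h1 : s0 + i ≡ t + j [MOD m] := hvi.trans hvj.symm
    have h2 : (s0 + i) + (m - s0) ≡ (t + j) + (m - s0) [MOD m] := Nat.ModEq.add_right _ h1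
    rw [show s0 + i + (m - s0) = i + m by omega,
        show t + j + (m - s0) = (t + m - s0) + j by omega] at h2
    have h3 : i ≡ (t + m - s0) + j [MOD m] :=
      (by unfold Nat.ModEq; rw [Nat.add_mod_right] : i + m ≡ i [MOD m]).symm.trans h2
    have h4 : i ≡ δ t + j [MOD m] :=
      h3.trans (Nat.ModEq.add_right j (Nat.mod_modEq _ m)).symm
    have h5 : (m:ℤ) ∣ ((δ t : ℤ) + j - i) := by
      have := h4.dvd
      have hc : ((δ t + j : ℕ) : ℤ) - (i:ℕ) = (δ t : ℤ) + j - i := by push_cast; ring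
      rwa [hc] at this
    obtain ⟨c, hc⟩ := h5
    have hm' : (0:ℤ) < m := by exact_mod_cast hm
    have hδt := hδlt t
    have := int_mul_cases hm' hc (by push_cast; omega) (by push_cast; omega)
    rcases this with h | h
    · left; omega
    · right; omega
  -- claim C2
  have C2 : ∀ t ∈ S, ∀ u ∈ S, δ t < r → m - r + 1 ≤ δ u → δ u ≠ δ t + (m - r) := by
    intro t ht u hu hδt hδu heq
    obtain ⟨v, hv⟩ := hint t ht u hu
    rw [Finset.mem_inter] at hv
    obtain ⟨i, hi, hvi⟩ := mem_cyc.mp hv.1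
    obtain ⟨j, hj, hvj⟩ := mem_cyc.mp hv.2
    have h1 : t + i ≡ u + j [MOD m] := hvi.trans hvj.symm
    have h2 : (s0 + δ t) + i ≡ (s0 + δ u) + j [MOD m] :=
      ((Nat.ModEq.add_right i (hδrep t)).trans h1).trans
        (Nat.ModEq.add_right j (hδrep u)).symm
    have h2' : s0 + (δ t + i) ≡ s0 + (δ u + j) [MOD m] := by
      rw [show s0 + (δ t + i) = s0 + δ t + i by omega,
          show s0 + (δ u + j) = s0 + δ u + j by omega]
      exact h2
    have h3 : δ t + i ≡ δ u + j [MOD m] := Nat.ModEq.add_left_cancel' s0 h2'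
    rw [heq] at h3
    have hδtlt := hδlt t
    have hδult := hδlt u
    have h4 : (m:ℤ) ∣ ((δ t : ℤ) + (m - r : ℕ) + j - (δ t + i)) := by
      have := h3.dvd
      have hc : ((δ t + (m - r) + j : ℕ) : ℤ) - ((δ t + i : ℕ):ℤ)
          = (δ t : ℤ) + (m - r : ℕ) + j - (δ t + i) := by push_cast; ring
      rwa [hc] at this
    have hm' : (0:ℤ) < m := by exact_mod_cast hm
    have hmr : ((m - r : ℕ) : ℤ) = (m:ℤ) - r := by push_cast; omega
    exact int_no_middle hm' h4 (by rw [hmr]; push_cast; omega) (by rw [hmr]; push_cast; omega)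
  -- final pairing argument
  have hmap : ∀ t ∈ S, (if δ t < r then δ t else δ t - (m - r)) ∈ Finset.range r := by
    intro t ht
    by_cases h : δ t < r
    · simp [h]
    · rw [if_neg h]
      have := C1 t ht
      rw [Finset.mem_range]
      have h2 := hδlt t
      omega
  have hinj : ∀ t ∈ S, ∀ u ∈ S,
      (if δ t < r then δ t else δ t - (m - r)) = (if δ u < r then δ u else δ u - (m - r)) →
      t = u := by
    intro t ht u hu h
    by_cases h1 : δ t < r <;> by_cases h2 : δ u < r
    · rw [if_pos h1, if_pos h2] at h; exact hδinj t ht u hu h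
    · rw [if_pos h1, if_neg h2] at h
      exfalso
      have hc1 := C1 u hu
      exact C2 t ht u hu h1 (by omega) (by omega)
    · rw [if_neg h1, if_pos h2] at h
      exfalso
      have hc1 := C1 t ht
      exact C2 u hu t ht h2 (by omega) (by omega)
    · rw [if_neg h1, if_neg h2] at h
      have hc1 := C1 t ht
      have hc2 := C1 u hu
      exact hδinj t ht u hu (by omega)
  calc S.card ≤ (Finset.range r).card := Finset.card_le_card_of_injOn _ hmap hinj
    _ = r := Finset.card_range r


lemma int_t0 {n t D : ℤ} (hn : 1 ≤ n) (hD1 : -(n*n - 1) ≤ D) (hD2 : D ≤ n*n - 1)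
    (ht : D = n*n*t) : t = 0 := by
  rcases lt_trichotomy t 0 with h' | h' | h'
  · exfalso
    have h2 : t ≤ -1 := by omega
    have : n*n*t ≤ n*n*(-1) := by nlinarith
    nlinarith
  · exact h'
  · exfalso
    have h2 : 1 ≤ t := by omega
    have : n*n*1 ≤ n*n*t := by nlinarith
    nlinarith

lemma int_b0 {n a b : ℤ} (hn : 1 ≤ n) (ha1 : -(n-1) ≤ a) (ha2 : a ≤ n-1)
    (hb1 : -(n-1) ≤ b) (hb2 : b ≤ n-1) (h : n*a + b = 0) : a = 0 ∧ b = 0 := by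
  have ha0 : a = 0 := by
    rcases lt_trichotomy a 0 with h' | h' | h'
    · exfalso
      have h2 : a ≤ -1 := by omega
      have : n*a ≤ n*(-1) := by nlinarith
      nlinarith
    · exact h'
    · exfalso
      have h2 : 1 ≤ a := by omega
      have : n*1 ≤ n*a := by nlinarith
      nlinarith
  exact ⟨ha0, by rw [ha0] at h; linarith⟩

/-- `tau` is injective modulo `n²` on the grid. -/
lemma tau_injOn {n : ℕ} (hn : 1 ≤ n) {p q : ℕ × ℕ}
    (hp : p ∈ Finset.Icc 1 n ×ˢ Finset.Icc 1 n) (hq : q ∈ Finset.Icc 1 n ×ˢ Finset.Icc 1 n)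
    (h : tau n n p % (n*n) = tau n n q % (n*n)) : p = q := by
  obtain ⟨a, b, hD, ha1, ha2, hb, hdvd, hfin⟩ := tau_facts hn hp hq
  have hn' : (1:ℤ) ≤ (n:ℤ) := by exact_mod_cast hn
  have hpm := hp
  have hqm := hq
  simp only [Finset.mem_product, Finset.mem_Icc] at hpm hqm
  have hdvd2 : ((n*n : ℕ):ℤ) ∣ ((tau n n q : ℤ) - tau n n p) := by
    have h1 : Nat.ModEq (n*n) (tau n n p) (tau n n q) := h
    exact h1.dvd
  obtain ⟨t, ht⟩ := hdvd2
  have hMc : ((n*n : ℕ):ℤ) = (n:ℤ)*n := by push_cast; ring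
  rw [hMc] at ht
  have hbp := tau_mem_range hn hp
  have hbq := tau_mem_range hn hq
  have hb1 : ((tau n n p :ℤ)) ≤ (n:ℤ)*n + n := by exact_mod_cast hbp.2
  have hb2 : ((n:ℤ) + 1) ≤ (tau n n p :ℤ) := by exact_mod_cast hbp.1
  have hb3 : ((tau n n q :ℤ)) ≤ (n:ℤ)*n + n := by exact_mod_cast hbq.2
  have hb4 : ((n:ℤ) + 1) ≤ (tau n n q :ℤ) := by exact_mod_cast hbq.1
  have ht0 : t = 0 := int_t0 hn' (by linarith) (by linarith) ht.symm.symm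
  rw [ht0, mul_zero] at ht
  rw [hD] at ht
  have hbb1 : -((n:ℤ)-1) ≤ b := by rw [hb]; push_cast; omega
  have hbb2 : b ≤ (n:ℤ)-1 := by rw [hb]; push_cast; omega
  obtain ⟨ha0, hb0⟩ := int_b0 hn' ha1 ha2 hbb1 hbb2 (by linarith)
  exact hfin ha0 hb0

lemma card_grid {n : ℕ} : (Finset.Icc 1 n ×ˢ Finset.Icc 1 n).card = n * n := by
  rw [Finset.card_product, Nat.card_Icc]
  simp

lemma grid_image_tau {n : ℕ} (hn : 1 ≤ n) :
    (Finset.Icc 1 n ×ˢ Finset.Icc 1 n).image (fun p => tau n n p % (n*n)) =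
      Finset.range (n*n) := by
  have hm : 0 < n*n := by positivity
  apply Finset.eq_of_subset_of_card_le
  · intro u hu
    obtain ⟨p, hp, hpu⟩ := Finset.mem_image.mp hu
    rw [Finset.mem_range, ← hpu]
    exact Nat.mod_lt _ hm
  · rw [Finset.card_range,
      Finset.card_image_of_injOn (fun p hp q hq h => tau_injOn hn hp hq h), card_grid]

def arcSet (n r s : ℕ) : Finset (ℕ × ℕ) :=
  (Finset.Icc 1 n ×ˢ Finset.Icc 1 n).filter (fun p => tau n n p % (n*n) ∈ cyc (n*n) s r)

lemma arcSet_subset {n r s : ℕ} : arcSet n r s ⊆ Finset.Icc 1 n ×ˢ Finset.Icc 1 n :=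
  Finset.filter_subset _ _

lemma arcSet_image {n r s : ℕ} (hn : 1 ≤ n) :
    (arcSet n r s).image (fun p => tau n n p % (n*n)) = cyc (n*n) s r ∩ Finset.range (n*n) := by
  apply subset_antisymm
  · intro u hu
    obtain ⟨p, hp, hpu⟩ := Finset.mem_image.mp hu
    rw [arcSet, Finset.mem_filter] at hp
    rw [Finset.mem_inter, ← hpu]
    exact ⟨hp.2, Finset.mem_range.mpr (Nat.mod_lt _ (by positivity))⟩
  · intro u hu
    rw [Finset.mem_inter] at hu
    have := hu.2
    rw [← grid_image_tau hn] at this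
    obtain ⟨p, hp, hpu⟩ := Finset.mem_image.mp this
    exact Finset.mem_image.mpr ⟨p, by rw [arcSet, Finset.mem_filter]; exact ⟨hp, hpu ▸ hu.1⟩, hpu⟩

lemma cyc_subset_range {m s r : ℕ} (hm : 0 < m) : cyc m s r ⊆ Finset.range m := by
  intro u hu
  obtain ⟨i, _, hi⟩ := mem_cyc.mp hu
  rw [Finset.mem_range, ← hi]
  exact Nat.mod_lt _ hm

lemma card_arcSet {n r s : ℕ} (hn : 1 ≤ n) (hrm : r ≤ n*n) : (arcSet n r s).card = r := by
  have hm : 0 < n*n := by positivity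
  have h1 : (arcSet n r s).image (fun p => tau n n p % (n*n)) = cyc (n*n) s r := by
    rw [arcSet_image hn, Finset.inter_eq_left.mpr (cyc_subset_range hm)]
  have h2 := Finset.card_image_of_injOn (s := arcSet n r s)
    (f := fun p => tau n n p % (n*n))
    (fun p hp q hq h => tau_injOn hn (arcSet_subset hp) (arcSet_subset hq) h)
  rw [h1] at h2
  rw [← h2, card_cyc hm hrm]

lemma mem_genPerms {k r n : ℕ} {A : Finset (ℕ × ℕ)} :
    A ∈ genPerms k r n ↔ A ⊆ Finset.Icc 1 k ×ˢ Finset.Icc 1 n ∧ A.card = r ∧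
      (∀ p ∈ A, ∀ q ∈ A, p.1 = q.1 → p = q) ∧ (∀ p ∈ A, ∀ q ∈ A, p.2 = q.2 → p = q) := by
  unfold genPerms
  rw [Finset.mem_filter, Finset.mem_powerset]

lemma arcSet_mem_genPerms {n r : ℕ} (hn : 2 ≤ n) (hr1 : 1 ≤ r) (hr : r ≤ n - 1) (s : ℕ) :
    arcSet n r s ∈ genPerms n r n := by
  have hnn : n ≤ n*n := Nat.le_mul_of_pos_left n (by omega)
  refine mem_genPerms.mpr ⟨arcSet_subset, card_arcSet (by omega) (by omega), ?_, ?_⟩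
  · intro p hp q hq h
    rw [arcSet, Finset.mem_filter] at hp hq
    obtain ⟨i, hi, hpi⟩ := mem_cyc.mp hp.2
    obtain ⟨j, hj, hqj⟩ := mem_cyc.mp hq.2
    exact tau_core hn hr hp.1 hq.1 hi hj hpi.symm hqj.symm (Or.inl h)
  · intro p hp q hq h
    rw [arcSet, Finset.mem_filter] at hp hq
    obtain ⟨i, hi, hpi⟩ := mem_cyc.mp hp.2
    obtain ⟨j, hj, hqj⟩ := mem_cyc.mp hq.2
    exact tau_core hn hr hp.1 hq.1 hi hj hpi.symm hqj.symm (Or.inr h)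

variable {n : ℕ}

/-- Glue two bijections (on a subtype and its complement) into a permutation. -/
def glue (p q : Fin n → Prop) [DecidablePred p] [DecidablePred q]
    (e₁ : {x // p x} ≃ {x // q x}) (e₂ : {x // ¬p x} ≃ {x // ¬q x}) : Equiv.Perm (Fin n) :=
  (Equiv.sumCompl p).symm.trans ((e₁.sumCongr e₂).trans (Equiv.sumCompl q))

lemma glue_pos {p q : Fin n → Prop} [DecidablePred p] [DecidablePred q]
    {e₁ : {x // p x} ≃ {x // q x}} {e₂ : {x // ¬p x} ≃ {x // ¬q x}} {x : Fin n} (h : p x) :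
    glue p q e₁ e₂ x = (e₁ ⟨x, h⟩ : {x // q x}).val := by
  simp [glue, Equiv.sumCompl_symm_apply_of_pos h]

lemma glue_neg {p q : Fin n → Prop} [DecidablePred p] [DecidablePred q]
    {e₁ : {x // p x} ≃ {x // q x}} {e₂ : {x // ¬p x} ≃ {x // ¬q x}} {x : Fin n} (h : ¬ p x) :
    glue p q e₁ e₂ x = (e₂ ⟨x, h⟩ : {x // ¬q x}).val := by
  simp [glue, Equiv.sumCompl_symm_apply_of_neg h]

lemma card_compl_sub (Y : Finset (Fin n)) :
    Fintype.card {x : Fin n // ¬ (x ∈ Y)} = n - Y.card := by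
  rw [Fintype.card_subtype_compl]
  simp [Fintype.card_coe]

/-- Number of permutations with prescribed (injective) values on `Y`. -/
lemma card_perm_prescribe (Y : Finset (Fin n)) (g : Fin n → Fin n)
    (hg : Set.InjOn g (Y : Set (Fin n))) :
    ((univ : Finset (Equiv.Perm (Fin n))).filter (fun ψ => ∀ i ∈ Y, ψ i = g i)).card
      = (n - Y.card).factorial := by
  classical
  set T : Finset (Fin n) := Y.image g with hT
  have hTcard : T.card = Y.card := Finset.card_image_of_injOn hg
  -- the fixed bijection Y ≃ T induced by g
  have hf1 : Function.Bijective (fun i : {x // x ∈ Y} => (⟨g i.1, Finset.mem_image_of_mem g i.2⟩ : {x // x ∈ T})) := by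
    rw [Fintype.bijective_iff_injective_and_card]
    constructor
    · intro a b hab
      exact Subtype.ext (hg a.2 b.2 (congrArg Subtype.val hab))
    · simp [Fintype.card_coe, hTcard]
  let eY : {x // x ∈ Y} ≃ {x // x ∈ T} := Equiv.ofBijective _ hf1
  have heY : ∀ i : {x // x ∈ Y}, (eY i).val = g i.1 := fun i => rfl
  -- main equivalence
  have hmaps : ∀ (ψ : Equiv.Perm (Fin n)), (∀ i ∈ Y, ψ i = g i) →
      ∀ x : {x : Fin n // ¬ x ∈ Y}, ψ x.1 ∉ T := by
    intro ψ hψ x hx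
    obtain ⟨i, hi, hgi⟩ := Finset.mem_image.mp hx
    have : ψ i = ψ x.1 := by rw [hψ i hi, hgi]
    exact x.2 (ψ.injective this ▸ hi)
  have hrestr : ∀ (ψ : Equiv.Perm (Fin n)) (hψ : ∀ i ∈ Y, ψ i = g i),
      Function.Bijective (fun x : {x : Fin n // ¬ x ∈ Y} =>
        (⟨ψ x.1, hmaps ψ hψ x⟩ : {x : Fin n // ¬ x ∈ T})) := by
    intro ψ hψ
    rw [Fintype.bijective_iff_injective_and_card]
    constructor
    · intro a b hab
      exact Subtype.ext (ψ.injective (congrArg Subtype.val hab))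
    · rw [card_compl_sub, card_compl_sub, hTcard]
  let E : {ψ : Equiv.Perm (Fin n) // ∀ i ∈ Y, ψ i = g i} ≃
      ({x : Fin n // ¬ x ∈ Y} ≃ {x : Fin n // ¬ x ∈ T}) :=
    { toFun := fun ψ => Equiv.ofBijective _ (hrestr ψ.1 ψ.2)
      invFun := fun e₂ => ⟨glue (· ∈ Y) (· ∈ T) eY e₂, fun i hi => by
        rw [glue_pos hi]; exact heY ⟨i, hi⟩⟩
      left_inv := by
        intro ψ
        apply Subtype.ext
        apply Equiv.ext
        intro x
        by_cases hx : x ∈ Y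
        · rw [glue_pos hx]
          exact (ψ.2 x hx).symm
        · rw [glue_neg hx]
          rfl
      right_inv := by
        intro e₂
        apply Equiv.ext
        intro x
        apply Subtype.ext
        have : (glue (· ∈ Y) (· ∈ T) eY e₂) x.1 = (e₂ x).val := by
          rw [glue_neg x.2]
        simp only [Equiv.ofBijective_apply]
        exact this }
  have h1 : ((univ : Finset (Equiv.Perm (Fin n))).filter (fun ψ => ∀ i ∈ Y, ψ i = g i)).card
      = Fintype.card {ψ : Equiv.Perm (Fin n) // ∀ i ∈ Y, ψ i = g i} :=
    (Fintype.card_subtype _).symm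
  have e2 : {x : Fin n // ¬ x ∈ Y} ≃ {x : Fin n // ¬ x ∈ T} :=
    Fintype.equivOfCardEq (by rw [card_compl_sub, card_compl_sub, hTcard])
  rw [h1, Fintype.card_congr E, Fintype.card_equiv e2, card_compl_sub]

/-- Number of permutations mapping `X` into `Z` (`|X| = |Z|`). -/
lemma card_perm_mapsto (X Z : Finset (Fin n)) (hcard : X.card = Z.card) :
    ((univ : Finset (Equiv.Perm (Fin n))).filter (fun φ => ∀ i ∈ X, φ i ∈ Z)).card
      = (X.card).factorial * (n - X.card).factorial := by
  classical
  have hr1 : ∀ (φ : Equiv.Perm (Fin n)) (hφ : ∀ i ∈ X, φ i ∈ Z),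
      Function.Bijective (fun i : {x // x ∈ X} => (⟨φ i.1, hφ i.1 i.2⟩ : {x // x ∈ Z})) := by
    intro φ hφ
    rw [Fintype.bijective_iff_injective_and_card]
    constructor
    · intro a b hab
      exact Subtype.ext (φ.injective (congrArg Subtype.val hab))
    · simp [Fintype.card_coe, hcard]
  have hmaps : ∀ (φ : Equiv.Perm (Fin n)) (hφ : ∀ i ∈ X, φ i ∈ Z),
      ∀ x : {x : Fin n // ¬ x ∈ X}, φ x.1 ∉ Z := by
    intro φ hφ x hx
    obtain ⟨i, hi⟩ := (hr1 φ hφ).surjective ⟨φ x.1, hx⟩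
    have : φ i.1 = φ x.1 := congrArg Subtype.val hi
    exact x.2 (φ.injective this ▸ i.2)
  have hr2 : ∀ (φ : Equiv.Perm (Fin n)) (hφ : ∀ i ∈ X, φ i ∈ Z),
      Function.Bijective (fun x : {x : Fin n // ¬ x ∈ X} =>
        (⟨φ x.1, hmaps φ hφ x⟩ : {x : Fin n // ¬ x ∈ Z})) := by
    intro φ hφ
    rw [Fintype.bijective_iff_injective_and_card]
    constructor
    · intro a b hab
      exact Subtype.ext (φ.injective (congrArg Subtype.val hab))
    · rw [card_compl_sub, card_compl_sub, hcard]
  let E : {φ : Equiv.Perm (Fin n) // ∀ i ∈ X, φ i ∈ Z} ≃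
      (({x : Fin n // x ∈ X} ≃ {x : Fin n // x ∈ Z}) ×
       ({x : Fin n // ¬ x ∈ X} ≃ {x : Fin n // ¬ x ∈ Z})) :=
    { toFun := fun φ => (Equiv.ofBijective _ (hr1 φ.1 φ.2), Equiv.ofBijective _ (hr2 φ.1 φ.2))
      invFun := fun e => ⟨glue (· ∈ X) (· ∈ Z) e.1 e.2, fun i hi => by
        rw [glue_pos hi]; exact (e.1 ⟨i, hi⟩).2⟩
      left_inv := by
        intro φ
        apply Subtype.ext
        apply Equiv.ext
        intro x
        by_cases hx : x ∈ X
        · rw [glue_pos hx]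
          rfl
        · rw [glue_neg hx]
          rfl
      right_inv := by
        intro e
        apply Prod.ext
        · apply Equiv.ext
          intro x
          apply Subtype.ext
          simp only [Equiv.ofBijective_apply]
          rw [glue_pos x.2]
        · apply Equiv.ext
          intro x
          apply Subtype.ext
          simp only [Equiv.ofBijective_apply]
          rw [glue_neg x.2] }
  have h1 : ((univ : Finset (Equiv.Perm (Fin n))).filter (fun φ => ∀ i ∈ X, φ i ∈ Z)).card
      = Fintype.card {φ : Equiv.Perm (Fin n) // ∀ i ∈ X, φ i ∈ Z} :=
    (Fintype.card_subtype _).symm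
  rw [h1, Fintype.card_congr E, Fintype.card_prod]
  have e1 : {x : Fin n // x ∈ X} ≃ {x : Fin n // x ∈ Z} :=
    Fintype.equivOfCardEq (by simp [Fintype.card_coe, hcard])
  have e2 : {x : Fin n // ¬ x ∈ X} ≃ {x : Fin n // ¬ x ∈ Z} :=
    Fintype.equivOfCardEq (by rw [card_compl_sub, card_compl_sub, hcard])
  rw [Fintype.card_equiv e1, Fintype.card_equiv e2, card_compl_sub]
  simp [Fintype.card_coe]


lemma card_fin_of_nat {n : ℕ} (Y : Finset ℕ) (hY : Y ⊆ Finset.Icc 1 n) :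
    ((univ : Finset (Fin n)).filter (fun i => i.1 + 1 ∈ Y)).card = Y.card := by
  apply Finset.card_bij (fun (a : Fin n) _ => a.1 + 1)
  · intro a ha
    exact (Finset.mem_filter.mp ha).2
  · intro a ha b hb hab
    exact Fin.ext (by omega)
  · intro y hy
    have hy' := Finset.mem_Icc.mp (hY hy)
    refine ⟨⟨y - 1, by omega⟩, Finset.mem_filter.mpr ⟨Finset.mem_univ _, by
      simpa [Nat.sub_add_cancel hy'.1] using hy⟩, by simp; omega⟩

/-- `liftPerm` version of `card_perm_prescribe`. -/
lemma card_lift_prescribe {n : ℕ} (Y : Finset ℕ) (hY : Y ⊆ Finset.Icc 1 n) (h : ℕ → ℕ)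
    (hmaps : ∀ y ∈ Y, h y ∈ Finset.Icc 1 n) (hinj : Set.InjOn h (Y : Set ℕ)) :
    ((univ : Finset (Equiv.Perm (Fin n))).filter
        (fun ψ => ∀ y ∈ Y, liftPerm n ψ y = h y)).card = (n - Y.card).factorial := by
  classical
  set Y' : Finset (Fin n) := (univ : Finset (Fin n)).filter (fun i => i.1 + 1 ∈ Y) with hY'
  have hcY : Y'.card = Y.card := card_fin_of_nat Y hY
  have hgdef : ∀ (i : Fin n), i.1 + 1 ∈ Y → h (i.1 + 1) - 1 < n := by
    intro i hi
    have := Finset.mem_Icc.mp (hmaps _ hi)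
    omega
  set g : Fin n → Fin n := fun i =>
    if hc : i.1 + 1 ∈ Y then ⟨h (i.1 + 1) - 1, hgdef i hc⟩ else i with hg
  have hcond : ∀ ψ : Equiv.Perm (Fin n),
      (∀ y ∈ Y, liftPerm n ψ y = h y) ↔ (∀ i ∈ Y', ψ i = g i) := by
    intro ψ
    constructor
    · intro hψ i hi
      have hiY : i.1 + 1 ∈ Y := (Finset.mem_filter.mp hi).2
      have hIcc := Finset.mem_Icc.mp (hY hiY)
      have hval := hψ _ hiY
      rw [liftPerm_eval ψ hIcc.1 hIcc.2] at hval
      simp only [Nat.add_sub_cancel, Fin.eta] at hval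
      have hh := Finset.mem_Icc.mp (hmaps _ hiY)
      rw [hg]
      simp only [dif_pos hiY]
      rw [Fin.ext_iff]
      simp only [Fin.val_mk]
      omega
    · intro hψ y hy
      have hIcc := Finset.mem_Icc.mp (hY hy)
      have hiY' : (⟨y - 1, by omega⟩ : Fin n) ∈ Y' := by
        rw [hY', Finset.mem_filter]
        exact ⟨Finset.mem_univ _, by simpa [Nat.sub_add_cancel hIcc.1] using hy⟩
      have hval := hψ _ hiY'
      rw [liftPerm_eval ψ hIcc.1 hIcc.2, hval, hg]
      simp only
      rw [dif_pos (by simpa [Nat.sub_add_cancel hIcc.1] using hy : (y - 1) + 1 ∈ Y)]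
      have hh := Finset.mem_Icc.mp (hmaps _ hy)
      simp only
      rw [show y - 1 + 1 = y by omega]
      omega
  have hginj : Set.InjOn g (Y' : Set (Fin n)) := by
    intro a ha b hb hab
    have haY : a.1 + 1 ∈ Y := by
      simp only [hY', Finset.coe_filter, Set.mem_setOf_eq] at ha
      exact ha.2
    have hbY : b.1 + 1 ∈ Y := by
      simp only [hY', Finset.coe_filter, Set.mem_setOf_eq] at hb
      exact hb.2
    rw [hg] at hab
    simp only [dif_pos haY, dif_pos hbY] at hab
    have hha := Finset.mem_Icc.mp (hmaps _ haY)
    have hhb := Finset.mem_Icc.mp (hmaps _ hbY)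
    have : h (a.1 + 1) = h (b.1 + 1) := by
      have := congrArg Fin.val hab
      simp only at this
      omega
    have := hinj haY hbY this
    exact Fin.ext (by omega)
  calc ((univ : Finset (Equiv.Perm (Fin n))).filter
        (fun ψ => ∀ y ∈ Y, liftPerm n ψ y = h y)).card
      = ((univ : Finset (Equiv.Perm (Fin n))).filter (fun ψ => ∀ i ∈ Y', ψ i = g i)).card := by
        apply Finset.card_nbij id (by intro ψ hψ; rw [Finset.mem_coe, Finset.mem_filter] at *; exact ⟨hψ.1, (hcond ψ).mp hψ.2⟩)
          (fun a _ b _ h => h)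
        intro ψ hψ
        rw [Finset.coe_filter] at *
        simp only [Set.mem_setOf_eq] at *
        exact ⟨ψ, ⟨hψ.1, (hcond ψ).mpr hψ.2⟩, rfl⟩
    _ = (n - Y'.card).factorial := card_perm_prescribe Y' g hginj
    _ = (n - Y.card).factorial := by rw [hcY]

/-- `liftPerm` version of `card_perm_mapsto`. -/
lemma card_lift_mapsto {n : ℕ} (X Z : Finset ℕ) (hX : X ⊆ Finset.Icc 1 n)
    (hZ : Z ⊆ Finset.Icc 1 n) (hcard : X.card = Z.card) :
    ((univ : Finset (Equiv.Perm (Fin n))).filter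
        (fun φ => ∀ x ∈ X, liftPerm n φ x ∈ Z)).card
      = (X.card).factorial * (n - X.card).factorial := by
  classical
  set X' : Finset (Fin n) := (univ : Finset (Fin n)).filter (fun i => i.1 + 1 ∈ X) with hX'
  set Z' : Finset (Fin n) := (univ : Finset (Fin n)).filter (fun i => i.1 + 1 ∈ Z) with hZ'
  have hcX : X'.card = X.card := card_fin_of_nat X hX
  have hcZ : Z'.card = Z.card := card_fin_of_nat Z hZ
  have hcond : ∀ φ : Equiv.Perm (Fin n),
      (∀ x ∈ X, liftPerm n φ x ∈ Z) ↔ (∀ i ∈ X', φ i ∈ Z') := by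
    intro φ
    constructor
    · intro hφ i hi
      have hiX : i.1 + 1 ∈ X := (Finset.mem_filter.mp hi).2
      have hIcc := Finset.mem_Icc.mp (hX hiX)
      have hval := hφ _ hiX
      rw [liftPerm_eval φ hIcc.1 hIcc.2] at hval
      simp only [Nat.add_sub_cancel, Fin.eta] at hval
      rw [hZ', Finset.mem_filter]
      exact ⟨Finset.mem_univ _, hval⟩
    · intro hφ x hx
      have hIcc := Finset.mem_Icc.mp (hX hx)
      have hiX' : (⟨x - 1, by omega⟩ : Fin n) ∈ X' := by
        rw [hX', Finset.mem_filter]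
        exact ⟨Finset.mem_univ _, by simpa [Nat.sub_add_cancel hIcc.1] using hx⟩
      have hval := hφ _ hiX'
      rw [hZ', Finset.mem_filter] at hval
      rw [liftPerm_eval φ hIcc.1 hIcc.2]
      exact hval.2
  calc ((univ : Finset (Equiv.Perm (Fin n))).filter
        (fun φ => ∀ x ∈ X, liftPerm n φ x ∈ Z)).card
      = ((univ : Finset (Equiv.Perm (Fin n))).filter (fun φ => ∀ i ∈ X', φ i ∈ Z')).card := by
        apply Finset.card_nbij id (by intro φ hφ; rw [Finset.mem_coe, Finset.mem_filter] at *; exact ⟨hφ.1, (hcond φ).mp hφ.2⟩)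
          (fun a _ b _ h => h)
        intro φ hφ
        rw [Finset.coe_filter] at *
        simp only [Set.mem_setOf_eq] at *
        exact ⟨φ, ⟨hφ.1, (hcond φ).mpr hφ.2⟩, rfl⟩
    _ = (X'.card).factorial * (n - X'.card).factorial := card_perm_mapsto X' Z' (by rw [hcX, hcZ, hcard])
    _ = (X.card).factorial * (n - X.card).factorial := by rw [hcX]


def pmap (n : ℕ) (φ ψ : Equiv.Perm (Fin n)) (p : ℕ × ℕ) : ℕ × ℕ :=
  (liftPerm n φ p.1, liftPerm n ψ p.2)

lemma pmap_injective {n : ℕ} (φ ψ : Equiv.Perm (Fin n)) : Function.Injective (pmap n φ ψ) := by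
  intro p q h
  unfold pmap at h
  exact Prod.ext (liftPerm_inj φ (congrArg Prod.fst h)) (liftPerm_inj ψ (congrArg Prod.snd h))

lemma pmap_image_mem_genPerms {n r : ℕ} (φ ψ : Equiv.Perm (Fin n)) {J : Finset (ℕ × ℕ)}
    (hJ : J ∈ genPerms n r n) : J.image (pmap n φ ψ) ∈ genPerms n r n := by
  obtain ⟨hJs, hJc, hJ1, hJ2⟩ := mem_genPerms.mp hJ
  refine mem_genPerms.mpr ⟨?_, ?_, ?_, ?_⟩
  · intro u hu
    obtain ⟨p, hp, hpu⟩ := Finset.mem_image.mp hu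
    have hpg := Finset.mem_product.mp (hJs hp)
    rw [← hpu]
    exact Finset.mem_product.mpr ⟨liftPerm_mem φ hpg.1, liftPerm_mem ψ hpg.2⟩
  · rw [Finset.card_image_of_injective _ (pmap_injective φ ψ), hJc]
  · intro u hu v hv huv
    obtain ⟨p, hp, hpu⟩ := Finset.mem_image.mp hu
    obtain ⟨q, hq, hqv⟩ := Finset.mem_image.mp hv
    rw [← hpu, ← hqv] at huv ⊢
    have : p.1 = q.1 := liftPerm_inj φ huv
    rw [hJ1 p hp q hq this]
  · intro u hu v hv huv
    obtain ⟨p, hp, hpu⟩ := Finset.mem_image.mp hu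
    obtain ⟨q, hq, hqv⟩ := Finset.mem_image.mp hv
    rw [← hpu, ← hqv] at huv ⊢
    have : p.2 = q.2 := liftPerm_inj ψ huv
    rw [hJ2 p hp q hq this]

/-- The key counting lemma: the number of pairs `(φ, ψ)` with
`(φ × ψ)(J) = A` is `r! · (n-r)! · (n-r)!`. -/
lemma card_pairs_image_eq {n r : ℕ} {J A : Finset (ℕ × ℕ)}
    (hJ : J ∈ genPerms n r n) (hA : A ∈ genPerms n r n) :
    (((univ : Finset (Equiv.Perm (Fin n))) ×ˢ (univ : Finset (Equiv.Perm (Fin n)))).filter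
        (fun w => J.image (pmap n w.1 w.2) = A)).card
      = r.factorial * ((n - r).factorial * (n - r).factorial) := by
  classical
  obtain ⟨hJs, hJc, hJ1, hJ2⟩ := mem_genPerms.mp hJ
  obtain ⟨hAs, hAc, hA1, hA2⟩ := mem_genPerms.mp hA
  set XJ : Finset ℕ := J.image Prod.fst with hXJdef
  set YJ : Finset ℕ := J.image Prod.snd with hYJdef
  set XA : Finset ℕ := A.image Prod.fst with hXAdef
  have hXJc : XJ.card = r := by
    rw [hXJdef, Finset.card_image_of_injOn (fun p hp q hq h => hJ1 p hp q hq h), hJc]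
  have hYJc : YJ.card = r := by
    rw [hYJdef, Finset.card_image_of_injOn (fun p hp q hq h => hJ2 p hp q hq h), hJc]
  have hXAc : XA.card = r := by
    rw [hXAdef, Finset.card_image_of_injOn (fun p hp q hq h => hA1 p hp q hq h), hAc]
  have hXJs : XJ ⊆ Finset.Icc 1 n := by
    intro x hx
    obtain ⟨p, hp, hpx⟩ := Finset.mem_image.mp hx
    exact hpx ▸ (Finset.mem_product.mp (hJs hp)).1
  have hYJs : YJ ⊆ Finset.Icc 1 n := by
    intro y hy
    obtain ⟨p, hp, hpy⟩ := Finset.mem_image.mp hy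
    exact hpy ▸ (Finset.mem_product.mp (hJs hp)).2
  have hXAs : XA ⊆ Finset.Icc 1 n := by
    intro x hx
    obtain ⟨p, hp, hpx⟩ := Finset.mem_image.mp hx
    exact hpx ▸ (Finset.mem_product.mp (hAs hp)).1
  -- choice functions
  have hAy' : ∀ x : ℕ, ∃ y : ℕ, x ∈ XA → (x, y) ∈ A := by
    intro x
    by_cases hx : x ∈ XA
    · obtain ⟨p, hp, hpx⟩ := Finset.mem_image.mp hx
      exact ⟨p.2, fun _ => by rw [show (x, p.2) = p from Prod.ext hpx.symm rfl]; exact hp⟩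
    · exact ⟨0, fun h => absurd h hx⟩
  choose yA hyA using hAy'
  have hJx' : ∀ y : ℕ, ∃ x : ℕ, y ∈ YJ → (x, y) ∈ J := by
    intro y
    by_cases hy : y ∈ YJ
    · obtain ⟨p, hp, hpy⟩ := Finset.mem_image.mp hy
      exact ⟨p.1, fun _ => by rw [show (p.1, y) = p from Prod.ext rfl hpy.symm]; exact hp⟩
    · exact ⟨0, fun h => absurd h hy⟩
  choose xJ hxJ using hJx'
  -- replace the image condition by a pointwise condition
  have hiff : ∀ w : Equiv.Perm (Fin n) × Equiv.Perm (Fin n),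
      (J.image (pmap n w.1 w.2) = A) ↔ (∀ p ∈ J, pmap n w.1 w.2 p ∈ A) := by
    intro w
    constructor
    · intro h p hp
      rw [← h]
      exact Finset.mem_image_of_mem _ hp
    · intro h
      apply Finset.eq_of_subset_of_card_le
      · intro u hu
        obtain ⟨p, hp, hpu⟩ := Finset.mem_image.mp hu
        exact hpu ▸ h p hp
      · rw [Finset.card_image_of_injective _ (pmap_injective w.1 w.2), hJc, hAc]
  -- per-φ inner count
  have hinner : ∀ φ : Equiv.Perm (Fin n),
      ((univ : Finset (Equiv.Perm (Fin n))).filter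
          (fun ψ => ∀ p ∈ J, pmap n φ ψ p ∈ A)).card
        = if (∀ x ∈ XJ, liftPerm n φ x ∈ XA) then (n - r).factorial else 0 := by
    intro φ
    by_cases hC : ∀ x ∈ XJ, liftPerm n φ x ∈ XA
    · rw [if_pos hC]
      set hfun : ℕ → ℕ := fun y => yA (liftPerm n φ (xJ y)) with hhfun
      have hfix : ∀ y ∈ YJ, liftPerm n φ (xJ y) ∈ XA := by
        intro y hy
        apply hC
        exact Finset.mem_image.mpr ⟨(xJ y, y), hxJ y hy, rfl⟩
      have hcond : ∀ ψ : Equiv.Perm (Fin n),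
          (∀ p ∈ J, pmap n φ ψ p ∈ A) ↔ (∀ y ∈ YJ, liftPerm n ψ y = hfun y) := by
        intro ψ
        constructor
        · intro h y hy
          have hp : (xJ y, y) ∈ J := hxJ y hy
          have h1 : (liftPerm n φ (xJ y), liftPerm n ψ y) ∈ A := h _ hp
          have h2 : (liftPerm n φ (xJ y), yA (liftPerm n φ (xJ y))) ∈ A :=
            hyA _ (hfix y hy)
          have := hA1 _ h1 _ h2 rfl
          exact congrArg Prod.snd this
        · intro h p hp
          have hy : p.2 ∈ YJ := Finset.mem_image.mpr ⟨p, hp, rfl⟩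
          have hxy : (xJ p.2, p.2) ∈ J := hxJ _ hy
          have hxeq : xJ p.2 = p.1 := congrArg Prod.fst (hJ2 _ hxy _ hp rfl)
          have h1 := h _ hy
          rw [hhfun] at h1
          simp only at h1
          rw [hxeq] at h1
          have hmem : liftPerm n φ p.1 ∈ XA := hC _ (Finset.mem_image.mpr ⟨p, hp, rfl⟩)
          have := hyA _ hmem
          unfold pmap
          rw [h1]
          exact this
      have hmapsY : ∀ y ∈ YJ, hfun y ∈ Finset.Icc 1 n := by
        intro y hy
        have := hyA _ (hfix y hy)
        exact (Finset.mem_product.mp (hAs this)).2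
      have hinjY : Set.InjOn hfun (YJ : Set ℕ) := by
        intro y1 hy1 y2 hy2 heq
        simp only [Finset.mem_coe] at hy1 hy2
        rw [hhfun] at heq
        simp only at heq
        have h1 : (liftPerm n φ (xJ y1), yA (liftPerm n φ (xJ y1))) ∈ A := hyA _ (hfix y1 hy1)
        have h2 : (liftPerm n φ (xJ y2), yA (liftPerm n φ (xJ y2))) ∈ A := hyA _ (hfix y2 hy2)
        have h3 : (liftPerm n φ (xJ y1), yA (liftPerm n φ (xJ y1)))
            = (liftPerm n φ (xJ y2), yA (liftPerm n φ (xJ y2))) := hA2 _ h1 _ h2 heq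
        have h4 : xJ y1 = xJ y2 := liftPerm_inj φ (congrArg Prod.fst h3)
        have h5 : (xJ y1, y1) ∈ J := hxJ _ hy1
        have h6 : (xJ y2, y2) ∈ J := hxJ _ hy2
        rw [h4] at h5
        exact congrArg Prod.snd (hJ1 _ h5 _ h6 rfl)
      calc ((univ : Finset (Equiv.Perm (Fin n))).filter
            (fun ψ => ∀ p ∈ J, pmap n φ ψ p ∈ A)).card
          = ((univ : Finset (Equiv.Perm (Fin n))).filter
            (fun ψ => ∀ y ∈ YJ, liftPerm n ψ y = hfun y)).card := by
            apply congrArg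
            apply Finset.filter_congr
            intro ψ _
            exact iff_iff_eq.mp (hcond ψ) ▸ Iff.rfl
        _ = (n - YJ.card).factorial := card_lift_prescribe YJ hYJs hfun hmapsY hinjY
        _ = (n - r).factorial := by rw [hYJc]
    · rw [if_neg hC]
      rw [Finset.card_eq_zero, Finset.filter_eq_empty_iff]
      intro ψ _
      intro hcon
      apply hC
      intro x hx
      obtain ⟨p, hp, hpx⟩ := Finset.mem_image.mp hx
      have := hcon p hp
      have : liftPerm n φ p.1 ∈ XA := Finset.mem_image.mpr ⟨pmap n φ ψ p, this, rfl⟩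
      rw [← hpx]
      exact this
  -- assemble
  calc (((univ : Finset (Equiv.Perm (Fin n))) ×ˢ (univ : Finset (Equiv.Perm (Fin n)))).filter
        (fun w => J.image (pmap n w.1 w.2) = A)).card
      = (((univ : Finset (Equiv.Perm (Fin n))) ×ˢ (univ : Finset (Equiv.Perm (Fin n)))).filter
        (fun w => ∀ p ∈ J, pmap n w.1 w.2 p ∈ A)).card := by
        apply congrArg
        apply Finset.filter_congr
        intro w _
        exact iff_iff_eq.mp (hiff w) ▸ Iff.rfl
    _ = ∑ φ : Equiv.Perm (Fin n), ((univ : Finset (Equiv.Perm (Fin n))).filter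
        (fun ψ => ∀ p ∈ J, pmap n φ ψ p ∈ A)).card := by
        rw [Finset.card_filter, Finset.sum_product]
        apply Finset.sum_congr rfl
        intro φ _
        rw [Finset.card_filter]
    _ = ∑ φ : Equiv.Perm (Fin n),
        (if (∀ x ∈ XJ, liftPerm n φ x ∈ XA) then (n - r).factorial else 0) := by
        apply Finset.sum_congr rfl
        intro φ _
        exact hinner φ
    _ = ((univ : Finset (Equiv.Perm (Fin n))).filter
        (fun φ => ∀ x ∈ XJ, liftPerm n φ x ∈ XA)).card * (n - r).factorial := by
        rw [← Finset.sum_filter, Finset.sum_const, smul_eq_mul]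
    _ = (r.factorial * (n - r).factorial) * (n - r).factorial := by
        rw [card_lift_mapsto XJ XA hXJs hXAs (by rw [hXJc, hXAc]), hXJc]
    _ = r.factorial * ((n - r).factorial * (n - r).factorial) := by ring


/-- The number of partial permutations of size `j` inside `S ×ˢ T`. -/
lemma card_ppm (S T : Finset ℕ) (j : ℕ) :
    ((S ×ˢ T).powerset.filter (fun A => A.card = j ∧
        (∀ p ∈ A, ∀ q ∈ A, p.1 = q.1 → p = q) ∧
        (∀ p ∈ A, ∀ q ∈ A, p.2 = q.2 → p = q))).card
      = S.card.choose j * T.card.descFactorial j := by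
  classical
  set F := ((S ×ˢ T).powerset.filter (fun A => A.card = j ∧
        (∀ p ∈ A, ∀ q ∈ A, p.1 = q.1 → p = q) ∧
        (∀ p ∈ A, ∀ q ∈ A, p.2 = q.2 → p = q))) with hF
  have hmem : ∀ {A : Finset (ℕ × ℕ)}, A ∈ F ↔ A ⊆ S ×ˢ T ∧ A.card = j ∧
      (∀ p ∈ A, ∀ q ∈ A, p.1 = q.1 → p = q) ∧
      (∀ p ∈ A, ∀ q ∈ A, p.2 = q.2 → p = q) := by
    intro A
    rw [hF, Finset.mem_filter, Finset.mem_powerset]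
  have hmap : ∀ A ∈ F, A.image Prod.fst ∈ S.powersetCard j := by
    intro A hA
    obtain ⟨hAs, hAc, hA1, _⟩ := hmem.mp hA
    rw [Finset.mem_powersetCard]
    constructor
    · intro x hx
      obtain ⟨p, hp, hpx⟩ := Finset.mem_image.mp hx
      exact hpx ▸ (Finset.mem_product.mp (hAs hp)).1
    · rw [Finset.card_image_of_injOn (fun p hp q hq h => hA1 p hp q hq h), hAc]
  rw [Finset.card_eq_sum_card_fiberwise hmap]
  have hfiber : ∀ X ∈ S.powersetCard j,
      (F.filter (fun A => A.image Prod.fst = X)).card = T.card.descFactorial j := by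
    intro X hX
    obtain ⟨hXS, hXc⟩ := Finset.mem_powersetCard.mp hX
    have hcard : (univ : Finset ({x // x ∈ X} ↪ {y // y ∈ T})).card
        = T.card.descFactorial j := by
      rw [Finset.card_univ, Fintype.card_embedding_eq, Fintype.card_coe, Fintype.card_coe, hXc]
    rw [← hcard]
    -- the bijection
    have huniq : ∀ (A : Finset (ℕ × ℕ)), A ∈ F → A.image Prod.fst = X →
        ∀ x : {x // x ∈ X}, ∃! p, p ∈ A ∧ p.1 = x.1 := by
      intro A hA hAX x
      obtain ⟨hAs, hAc, hA1, hA2⟩ := hmem.mp hA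
      have : x.1 ∈ A.image Prod.fst := hAX ▸ x.2
      obtain ⟨p, hp, hpx⟩ := Finset.mem_image.mp this
      exact ⟨p, ⟨hp, hpx⟩, fun q hq => hA1 q hq.1 p hp (by rw [hq.2, hpx])⟩
    apply Finset.card_bij
      (i := fun A hA => ⟨fun x => ⟨(A.choose (fun p => p.1 = x.1)
          (huniq A (Finset.mem_filter.mp hA).1 (Finset.mem_filter.mp hA).2 x)).2, by
            have hc1 := Finset.choose_mem (fun p => p.1 = x.1) A
              (huniq A (Finset.mem_filter.mp hA).1 (Finset.mem_filter.mp hA).2 x)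
            have hAs := (hmem.mp (Finset.mem_filter.mp hA).1).1
            exact (Finset.mem_product.mp (hAs hc1)).2⟩, by
          intro x y hxy
          have hA' := (Finset.mem_filter.mp hA).1
          have hAX := (Finset.mem_filter.mp hA).2
          obtain ⟨hAs, hAc, hA1, hA2⟩ := hmem.mp hA'
          have hmx := Finset.choose_mem (fun p => p.1 = x.1) A (huniq A hA' hAX x)
          have hmy := Finset.choose_mem (fun p => p.1 = y.1) A (huniq A hA' hAX y)
          have hsx := Finset.choose_property (fun p => p.1 = x.1) A (huniq A hA' hAX x)
          have hsy := Finset.choose_property (fun p => p.1 = y.1) A (huniq A hA' hAX y)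
          have h2 : (A.choose (fun p => p.1 = x.1) (huniq A hA' hAX x)).2
              = (A.choose (fun p => p.1 = y.1) (huniq A hA' hAX y)).2 :=
            congrArg Subtype.val hxy
          have heq2 := hA2 _ hmx _ hmy h2
          apply Subtype.ext
          rw [← hsx, ← hsy, heq2]⟩)
    · intro A hA
      exact Finset.mem_univ _
    · intro A hA B hB heq
      have hA' := (Finset.mem_filter.mp hA).1
      have hAX := (Finset.mem_filter.mp hA).2
      have hB' := (Finset.mem_filter.mp hB).1
      have hBX := (Finset.mem_filter.mp hB).2
      obtain ⟨hAs, hAc, hA1, hA2⟩ := hmem.mp hA'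
      obtain ⟨hBs, hBc, hB1, hB2⟩ := hmem.mp hB'
      apply Finset.ext
      intro p
      have key : ∀ (C : Finset (ℕ × ℕ)) (hC : C ∈ F) (hCX : C.image Prod.fst = X)
          (p : ℕ × ℕ), p ∈ C → ∀ hpX : p.1 ∈ X,
          (C.choose (fun q => q.1 = p.1) (huniq C hC hCX ⟨p.1, hpX⟩)) = p := by
        intro C hC hCX p hp hpX
        obtain ⟨hCs, hCc, hC1, hC2⟩ := hmem.mp hC
        have hm := Finset.choose_mem (fun q => q.1 = p.1) C (huniq C hC hCX ⟨p.1, hpX⟩)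
        have hs := Finset.choose_property (fun q => q.1 = p.1) C (huniq C hC hCX ⟨p.1, hpX⟩)
        exact hC1 _ hm p hp hs
      constructor
      · intro hp
        have hpX : p.1 ∈ X := hAX ▸ Finset.mem_image.mpr ⟨p, hp, rfl⟩
        have h1 := congrFun (congrArg (fun (e : {x // x ∈ X} ↪ {y // y ∈ T}) => e.toFun) heq)
          ⟨p.1, hpX⟩
        have h2 : (A.choose (fun q => q.1 = p.1) (huniq A hA' hAX ⟨p.1, hpX⟩)).2
            = (B.choose (fun q => q.1 = p.1) (huniq B hB' hBX ⟨p.1, hpX⟩)).2 :=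
          congrArg Subtype.val h1
        have h3 := key A hA' hAX p hp hpX
        have hmB := Finset.choose_mem (fun q => q.1 = p.1) B (huniq B hB' hBX ⟨p.1, hpX⟩)
        have hsB := Finset.choose_property (fun q => q.1 = p.1) B (huniq B hB' hBX ⟨p.1, hpX⟩)
        have : B.choose (fun q => q.1 = p.1) (huniq B hB' hBX ⟨p.1, hpX⟩) = p := by
          apply Prod.ext
          · rw [hsB]
          · rw [← h2, h3]
        rw [← this]
        exact hmB
      · intro hp
        have hpX : p.1 ∈ X := hBX ▸ Finset.mem_image.mpr ⟨p, hp, rfl⟩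
        have h1 := congrFun (congrArg (fun (e : {x // x ∈ X} ↪ {y // y ∈ T}) => e.toFun) heq)
          ⟨p.1, hpX⟩
        have h2 : (A.choose (fun q => q.1 = p.1) (huniq A hA' hAX ⟨p.1, hpX⟩)).2
            = (B.choose (fun q => q.1 = p.1) (huniq B hB' hBX ⟨p.1, hpX⟩)).2 :=
          congrArg Subtype.val h1
        have h3 := key B hB' hBX p hp hpX
        have hmA := Finset.choose_mem (fun q => q.1 = p.1) A (huniq A hA' hAX ⟨p.1, hpX⟩)
        have hsA := Finset.choose_property (fun q => q.1 = p.1) A (huniq A hA' hAX ⟨p.1, hpX⟩)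
        have : A.choose (fun q => q.1 = p.1) (huniq A hA' hAX ⟨p.1, hpX⟩) = p := by
          apply Prod.ext
          · rw [hsA]
          · rw [h2, h3]
        rw [← this]
        exact hmA
    · intro e _
      -- surjectivity
      set A : Finset (ℕ × ℕ) := X.attach.image (fun x => (x.1, (e x).1)) with hAdef
      have hApair : ∀ {p : ℕ × ℕ}, p ∈ A → ∃ x : {x // x ∈ X}, p = (x.1, (e x).1) := by
        intro p hp
        obtain ⟨x, _, hxp⟩ := Finset.mem_image.mp hp
        exact ⟨x, hxp.symm⟩
      have hAmem : ∀ x : {x // x ∈ X}, (x.1, (e x).1) ∈ A := by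
        intro x
        exact Finset.mem_image.mpr ⟨x, Finset.mem_attach _ _, rfl⟩
      have hAF : A ∈ F := by
        apply hmem.mpr
        refine ⟨?_, ?_, ?_, ?_⟩
        · intro p hp
          obtain ⟨x, hx⟩ := hApair hp
          rw [hx]
          exact Finset.mem_product.mpr ⟨hXS x.2, (e x).2⟩
        · rw [hAdef, Finset.card_image_of_injOn, Finset.card_attach, hXc]
          intro x _ y _ hxy
          exact Subtype.ext (congrArg Prod.fst hxy)
        · intro p hp q hq hpq
          obtain ⟨x, hx⟩ := hApair hp
          obtain ⟨y, hy⟩ := hApair hq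
          rw [hx, hy] at hpq ⊢
          rw [show x = y from Subtype.ext hpq]
        · intro p hp q hq hpq
          obtain ⟨x, hx⟩ := hApair hp
          obtain ⟨y, hy⟩ := hApair hq
          rw [hx, hy] at hpq ⊢
          rw [show x = y from e.injective (Subtype.ext hpq)]
      have hAX : A.image Prod.fst = X := by
        rw [hAdef, Finset.image_image]
        have : (Prod.fst ∘ fun x : {x // x ∈ X} => (x.1, (e x).1)) = fun x => x.1 := rfl
        rw [this, Finset.attach_image_val]
      refine ⟨A, Finset.mem_filter.mpr ⟨hAF, hAX⟩, ?_⟩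
      apply Function.Embedding.ext
      intro x
      apply Subtype.ext
      have hm := Finset.choose_mem (fun q => q.1 = x.1) A (huniq A hAF hAX x)
      have hs := Finset.choose_property (fun q => q.1 = x.1) A (huniq A hAF hAX x)
      obtain ⟨y, hy⟩ := hApair hm
      have : x = y := Subtype.ext (by rw [← hs, hy])
      subst this
      show (A.choose (fun p => p.1 = x.1) (huniq A hAF hAX x)).2 = (e x).1
      rw [hy]
  rw [Finset.sum_congr rfl hfiber, Finset.sum_const, Finset.card_powersetCard, smul_eq_mul]

/-- The size of a star. -/
lemma card_star {n r : ℕ} (hn : 1 ≤ n) (hr1 : 1 ≤ r) {a b : ℕ}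
    (ha : a ∈ Finset.Icc 1 n) (hb : b ∈ Finset.Icc 1 n) :
    ((genPerms n r n).filter (fun A => (a, b) ∈ A)).card
      = (n-1).choose (r-1) * (n-1).descFactorial (r-1) := by
  classical
  have hGcard := card_ppm ((Finset.Icc 1 n).erase a) ((Finset.Icc 1 n).erase b) (r-1)
  rw [Finset.card_erase_of_mem ha, Finset.card_erase_of_mem hb, Nat.card_Icc] at hGcard
  simp only [Nat.add_sub_cancel] at hGcard
  rw [← hGcard]
  set G := (((Finset.Icc 1 n).erase a ×ˢ (Finset.Icc 1 n).erase b).powerset.filter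
      (fun B => B.card = r-1 ∧ (∀ p ∈ B, ∀ q ∈ B, p.1 = q.1 → p = q) ∧
        (∀ p ∈ B, ∀ q ∈ B, p.2 = q.2 → p = q))) with hG
  have hGmem : ∀ {B : Finset (ℕ × ℕ)}, B ∈ G ↔
      B ⊆ (Finset.Icc 1 n).erase a ×ˢ (Finset.Icc 1 n).erase b ∧ B.card = r-1 ∧
      (∀ p ∈ B, ∀ q ∈ B, p.1 = q.1 → p = q) ∧ (∀ p ∈ B, ∀ q ∈ B, p.2 = q.2 → p = q) := by
    intro B
    rw [hG, Finset.mem_filter, Finset.mem_powerset]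
  refine Finset.card_bij' (fun A _ => A.erase (a, b)) (fun B _ => insert (a, b) B)
    ?_ ?_ ?_ ?_
  · -- hi
    intro A hA
    rw [Finset.mem_filter] at hA
    obtain ⟨hAs, hAc, hA1, hA2⟩ := mem_genPerms.mp hA.1
    have hab := hA.2
    apply hGmem.mpr
    refine ⟨?_, ?_, ?_, ?_⟩
    · intro p hp
      rw [Finset.mem_erase] at hp
      have hpg := Finset.mem_product.mp (hAs hp.2)
      apply Finset.mem_product.mpr
      constructor
      · rw [Finset.mem_erase]
        refine ⟨?_, hpg.1⟩
        intro hcon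
        exact hp.1 (hA1 p hp.2 (a, b) hab hcon)
      · rw [Finset.mem_erase]
        refine ⟨?_, hpg.2⟩
        intro hcon
        exact hp.1 (hA2 p hp.2 (a, b) hab hcon)
    · rw [Finset.card_erase_of_mem hab, hAc]
    · intro p hp q hq h
      exact hA1 p (Finset.mem_of_mem_erase hp) q (Finset.mem_of_mem_erase hq) h
    · intro p hp q hq h
      exact hA2 p (Finset.mem_of_mem_erase hp) q (Finset.mem_of_mem_erase hq) h
  · -- hj
    intro B hB
    obtain ⟨hBs, hBc, hB1, hB2⟩ := hGmem.mp hB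
    have habB : (a, b) ∉ B := by
      intro hcon
      have := (Finset.mem_product.mp (hBs hcon)).1
      exact (Finset.mem_erase.mp this).1 rfl
    rw [Finset.mem_filter]
    constructor
    · apply mem_genPerms.mpr
      refine ⟨?_, ?_, ?_, ?_⟩
      · intro p hp
        rcases Finset.mem_insert.mp hp with h | h
        · rw [h]
          exact Finset.mem_product.mpr ⟨ha, hb⟩
        · have := Finset.mem_product.mp (hBs h)
          exact Finset.mem_product.mpr
            ⟨Finset.mem_of_mem_erase this.1, Finset.mem_of_mem_erase this.2⟩
      · rw [Finset.card_insert_of_notMem habB, hBc]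
        omega
      · intro p hp q hq h
        rcases Finset.mem_insert.mp hp with h1 | h1 <;> rcases Finset.mem_insert.mp hq with h2 | h2
        · rw [h1, h2]
        · exfalso
          have := (Finset.mem_product.mp (hBs h2)).1
          rw [h1] at h
          exact (Finset.mem_erase.mp this).1 (by rw [← h])
        · exfalso
          have := (Finset.mem_product.mp (hBs h1)).1
          rw [h2] at h
          exact (Finset.mem_erase.mp this).1 (by rw [h])
        · exact hB1 p h1 q h2 h
      · intro p hp q hq h
        rcases Finset.mem_insert.mp hp with h1 | h1 <;> rcases Finset.mem_insert.mp hq with h2 | h2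
        · rw [h1, h2]
        · exfalso
          have := (Finset.mem_product.mp (hBs h2)).2
          rw [h1] at h
          exact (Finset.mem_erase.mp this).1 (by rw [← h])
        · exfalso
          have := (Finset.mem_product.mp (hBs h1)).2
          rw [h2] at h
          exact (Finset.mem_erase.mp this).1 (by rw [h])
        · exact hB2 p h1 q h2 h
    · exact Finset.mem_insert_self _ _
  · -- left inverse
    intro A hA
    rw [Finset.mem_filter] at hA
    exact Finset.insert_erase hA.2
  · -- right inverse
    intro B hB
    obtain ⟨hBs, _, _, _⟩ := hGmem.mp hB
    apply Finset.erase_insert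
    intro hcon
    have := (Finset.mem_product.mp (hBs hcon)).1
    exact (Finset.mem_erase.mp this).1 rfl

/-- The key arithmetic identity. -/
lemma key_arith {n r : ℕ} (hn2 : 2 ≤ n) (hr1 : 1 ≤ r) (hr : r ≤ n - 1) :
    ((n-1).choose (r-1) * ((n-1).factorial / (n-r).factorial))
        * ((n*n) * (r.factorial * ((n - r).factorial * (n - r).factorial)))
      = (n.factorial * n.factorial) * r := by
  obtain ⟨n', rfl⟩ : ∃ n', n = n' + 1 := ⟨n-1, by omega⟩
  obtain ⟨r', rfl⟩ : ∃ r', r = r' + 1 := ⟨r-1, by omega⟩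
  simp only [Nat.add_sub_cancel]
  have hrn : r' ≤ n' := by omega
  have hsub : n' + 1 - (r' + 1) = n' - r' := by omega
  rw [hsub]
  have hC : n'.choose r' * r'.factorial * (n' - r').factorial = n'.factorial := by
    have := Nat.choose_mul_factorial_mul_factorial hrn
    rwa [show n' - r' = n' - r' from rfl] at this
  have hdvd : (n' - r').factorial ∣ n'.factorial := Nat.factorial_dvd_factorial (by omega)
  have hD : n'.factorial / (n' - r').factorial * (n' - r').factorial = n'.factorial :=
    Nat.div_mul_cancel hdvd
  rw [Nat.factorial_succ r', Nat.factorial_succ n']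
  calc n'.choose r' * (n'.factorial / (n' - r').factorial)
        * ((n'+1)*(n'+1) * ((r'+1) * r'.factorial * ((n'-r').factorial * (n'-r').factorial)))
      = (n'+1)*(n'+1)*(r'+1) * ((n'.choose r' * r'.factorial * (n'-r').factorial)
          * (n'.factorial / (n' - r').factorial * (n'-r').factorial)) := by ring
    _ = (n'+1)*(n'+1)*(r'+1) * (n'.factorial * n'.factorial) := by rw [hC, hD]
    _ = (n'+1) * n'.factorial * ((n'+1) * n'.factorial) * (r'+1) := by ring

/-- Upper bound for intersecting families. -/
lemma main_upper {n r : ℕ} (hn2 : 2 ≤ n) (hr1 : 1 ≤ r) (hr : r ≤ n - 1)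
    (𝒜 : Finset (Finset (ℕ × ℕ))) (h𝒜 : 𝒜 ⊆ genPerms n r n) (hint : Intersecting 𝒜) :
    𝒜.card ≤ (n - 1).choose (r - 1) * ((n - 1).factorial / (n - r).factorial) := by
  classical
  set m := n*n with hm
  set K := r.factorial * ((n - r).factorial * (n - r).factorial) with hK
  set P := ((univ : Finset (Equiv.Perm (Fin n))) ×ˢ (univ : Finset (Equiv.Perm (Fin n)))) with hP
  set Ω := (Finset.range m) ×ˢ P with hΩ
  set W : ℕ × (Equiv.Perm (Fin n) × Equiv.Perm (Fin n)) → Finset (ℕ × ℕ) :=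
    fun ω => (arcSet n r ω.1).image (pmap n ω.2.1 ω.2.2) with hW
  -- Step 1 & 2 : N = |𝒜| * (m * K)
  have step12 : (Ω.filter (fun ω => W ω ∈ 𝒜)).card = 𝒜.card * (m * K) := by
    have h1 : ∀ ω ∈ Ω.filter (fun ω => W ω ∈ 𝒜), W ω ∈ 𝒜 :=
      fun ω hω => (Finset.mem_filter.mp hω).2
    rw [Finset.card_eq_sum_card_fiberwise h1]
    have h2 : ∀ A ∈ 𝒜, ((Ω.filter (fun ω => W ω ∈ 𝒜)).filter (fun ω => W ω = A)).card
        = m * K := by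
      intro A hA
      have e1 : (Ω.filter (fun ω => W ω ∈ 𝒜)).filter (fun ω => W ω = A)
          = Ω.filter (fun ω => W ω = A) := by
        rw [Finset.filter_filter]
        apply Finset.filter_congr
        intro ω _
        constructor
        · exact fun h => h.2
        · exact fun h => ⟨h ▸ hA, h⟩
      rw [e1, Finset.card_filter, Finset.sum_product]
      have e2 : ∀ s ∈ Finset.range m,
          (∑ w ∈ P, if W (s, w) = A then 1 else 0) = K := by
        intro s _
        rw [← Finset.card_filter]
        have := card_pairs_image_eq (arcSet_mem_genPerms hn2 hr1 hr s) (h𝒜 hA)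
        rw [hK]
        exact this
      rw [Finset.sum_congr rfl e2, Finset.sum_const, Finset.card_range, smul_eq_mul]
    rw [Finset.sum_congr rfl h2, Finset.sum_const, smul_eq_mul]
  -- Step 3 : N ≤ (n! * n!) * r
  have step3 : (Ω.filter (fun ω => W ω ∈ 𝒜)).card ≤ (n.factorial * n.factorial) * r := by
    rw [Finset.card_filter, Finset.sum_product, Finset.sum_comm]
    have h2r : 2 * r ≤ m := by
      have : 2 * n ≤ n * n := Nat.mul_le_mul_right n hn2
      omega
    have hbound : ∀ w ∈ P, (∑ s ∈ Finset.range m, if W (s, w) ∈ 𝒜 then 1 else 0) ≤ r := by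
      intro w _
      rw [← Finset.card_filter]
      apply katona hr1 h2r (Finset.filter_subset _ _)
      intro s hs t ht
      rw [Finset.mem_filter] at hs ht
      have hint' := hint _ hs.2 _ ht.2
      obtain ⟨u, hu⟩ := hint'
      rw [Finset.mem_inter] at hu
      obtain ⟨p, hp, hpu⟩ := Finset.mem_image.mp hu.1
      obtain ⟨q, hq, hqu⟩ := Finset.mem_image.mp hu.2
      have hpq : p = q := pmap_injective w.1 w.2 (by rw [hpu, hqu])
      rw [← hpq] at hq
      rw [arcSet, Finset.mem_filter] at hp hq
      exact ⟨tau n n p % (n*n), Finset.mem_inter.mpr ⟨hp.2, hq.2⟩⟩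
    calc (∑ w ∈ P, ∑ s ∈ Finset.range m, if W (s, w) ∈ 𝒜 then 1 else 0)
        ≤ P.card * r := by
          rw [← smul_eq_mul]
          exact Finset.sum_le_card_nsmul P _ r hbound
      _ = (n.factorial * n.factorial) * r := by
          rw [hP, Finset.card_product, Finset.card_univ, Fintype.card_perm, Fintype.card_fin]
  -- combine
  have hcomb : 𝒜.card * (m * K) ≤ (n.factorial * n.factorial) * r := step12 ▸ step3
  have hkey := key_arith hn2 hr1 hr
  have hpos : 0 < m * K := by
    rw [hm, hK]
    positivity
  apply Nat.le_of_mul_le_mul_right _ hpos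
  calc 𝒜.card * (m * K) ≤ (n.factorial * n.factorial) * r := hcomb
    _ = (n - 1).choose (r - 1) * ((n - 1).factorial / (n - r).factorial) * (m * K) := by
        rw [← hkey, hm, hK]

end EKRaux

/-- For `r ∈ [n-1]`, any intersecting subfamily of the family of
`r`-partial permutations `𝒫_{n,r,n}` has size at most `C(n-1,r-1)·(n-1)!/(n-r)!`,
and this bound is attained by every star. -/
theorem partialPerms_EKR (n r : ℕ) (hn : 1 ≤ n) (hr1 : 1 ≤ r) (hr : r ≤ n - 1) :
    (∀ 𝒜 : Finset (Finset (ℕ × ℕ)), 𝒜 ⊆ genPerms n r n → Intersecting 𝒜 →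
      𝒜.card ≤ (n - 1).choose (r - 1) * ((n - 1).factorial / (n - r).factorial)) ∧
    ∀ a ∈ Finset.Icc 1 n, ∀ b ∈ Finset.Icc 1 n,
      ((genPerms n r n).filter fun A => (a, b) ∈ A).card
        = (n - 1).choose (r - 1) * ((n - 1).factorial / (n - r).factorial) := by
  have hn2 : 2 ≤ n := by omega
  constructor
  · intro 𝒜 h𝒜 hint
    exact EKRaux.main_upper hn2 hr1 hr 𝒜 h𝒜 hint
  · intro a ha b hb
    rw [EKRaux.card_star hn hr1 ha hb]
    congr 1
    rw [Nat.descFactorial_eq_div (by omega : r - 1 ≤ n - 1),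
      show n - 1 - (r - 1) = n - r from by omega]
end

section
/- For n = k = r ≥ 2, there is no r-good cyclic ordering of [n] × [n]: for every bijection σ : [n]×[n] → [n²] there exist n cyclically consecutive elements under σ that do not have pairwise distinct first coordinates and pairwise distinct second coordinates. -/
open Finset

/-- For `n ≥ 2` there is no `n`-good cyclic ordering of `[n] × [n]`. -/
theorem no_good_ordering (n : ℕ) (hn : 2 ≤ n) (σ : ℕ × ℕ → ℕ)
    (hbij : Set.BijOn σ (Set.Icc 1 n ×ˢ Set.Icc 1 n) (Set.Icc 1 (n * n))) :
    ¬ IsGood n n n σ := by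
  intro hgood
  set m := n * n with hm
  have hnm : n < m := by rw [hm]; nlinarith
  have hm0 : 0 < m := by omega
  set grid := Finset.Icc 1 n ×ˢ Finset.Icc 1 n with hgrid
  have hmemgrid : ∀ p : ℕ × ℕ,
      p ∈ grid ↔ p ∈ (Set.Icc 1 n ×ˢ Set.Icc 1 n : Set (ℕ × ℕ)) := by
    intro p
    constructor
    · simp [hgrid, Finset.mem_product, Set.mem_prod, Prod.le_def, Set.mem_Icc]
      tauto
    · simp [hgrid, Finset.mem_product, Set.mem_prod, Prod.le_def, Set.mem_Icc]
      tauto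
  set f : ℕ × ℕ → ℕ := fun p => σ p % m with hf
  have hrange : ∀ p ∈ grid, 1 ≤ σ p ∧ σ p ≤ m := by
    intro p hp
    have := hbij.mapsTo ((hmemgrid p).1 hp)
    simpa [Set.mem_Icc] using this
  have hinj : ∀ p ∈ grid, ∀ q ∈ grid, f p = f q → p = q := by
    intro p hp q hq h
    have hp' := hrange p hp
    have hq' := hrange q hq
    have hσ : σ p = σ q := by
      rcases eq_or_lt_of_le hp'.2 with h1 | h1 <;>
        rcases eq_or_lt_of_le hq'.2 with h2 | h2
      · omega
      · exfalso
        simp only [hf, h1, Nat.mod_self, Nat.mod_eq_of_lt h2] at h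
        omega
      · exfalso
        simp only [hf, h2, Nat.mod_self, Nat.mod_eq_of_lt h1] at h
        omega
      · simpa only [hf, Nat.mod_eq_of_lt h1, Nat.mod_eq_of_lt h2] using h
    exact hbij.injOn ((hmemgrid p).1 hp) ((hmemgrid q).1 hq) hσ
  have hsurj : ∀ t, t < m → ∃ p ∈ grid, f p = t := by
    intro t ht
    rcases eq_or_ne t 0 with rfl | ht0
    · obtain ⟨p, hp, hσp⟩ := hbij.surjOn (show m ∈ Set.Icc 1 m by
        simp [Set.mem_Icc]; omega)
      exact ⟨p, (hmemgrid p).2 hp, by simp [hf, hσp]⟩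
    · obtain ⟨p, hp, hσp⟩ := hbij.surjOn (show t ∈ Set.Icc 1 m by
        simp [Set.mem_Icc]; omega)
      exact ⟨p, (hmemgrid p).2 hp, by simp [hf, hσp, Nat.mod_eq_of_lt ht]⟩
  have hcyc0 : cyc m 0 n = Finset.range n := by
    ext t
    simp only [cyc, Finset.mem_image, Finset.mem_range]
    constructor
    · rintro ⟨i, hi, rfl⟩
      rw [zero_add, Nat.mod_eq_of_lt (hi.trans hnm)]
      exact hi
    · intro ht
      exact ⟨t, ht, by rw [zero_add, Nat.mod_eq_of_lt (ht.trans hnm)]⟩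
  have hcyc1 : cyc m 1 n = Finset.Icc 1 n := by
    ext t
    simp only [cyc, Finset.mem_image, Finset.mem_range, Finset.mem_Icc]
    constructor
    · rintro ⟨i, hi, rfl⟩
      rw [Nat.mod_eq_of_lt (by omega)]
      omega
    · intro ht
      exact ⟨t - 1, by omega, by rw [Nat.mod_eq_of_lt (by omega)]; omega⟩
  set A0 : Finset (ℕ × ℕ) := grid.filter (fun p => f p < n) with hA0
  set A1 : Finset (ℕ × ℕ) := grid.filter (fun p => 1 ≤ f p ∧ f p ≤ n) with hA1
  have himg0 : A0.image f = cyc m 0 n := by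
    rw [hcyc0]
    ext t
    simp only [hA0, Finset.mem_image, Finset.mem_range, Finset.mem_filter]
    constructor
    · rintro ⟨p, ⟨hp, hlt⟩, rfl⟩
      exact hlt
    · intro ht
      obtain ⟨p, hp, hfp⟩ := hsurj t (ht.trans hnm)
      exact ⟨p, ⟨hp, by omega⟩, hfp⟩
  have himg1 : A1.image f = cyc m 1 n := by
    rw [hcyc1]
    ext t
    simp only [hA1, Finset.mem_image, Finset.mem_Icc, Finset.mem_filter]
    constructor
    · rintro ⟨p, ⟨hp, hlt⟩, rfl⟩
      exact hlt
    · intro ht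
      obtain ⟨p, hp, hfp⟩ := hsurj t (by omega)
      exact ⟨p, ⟨hp, by omega⟩, hfp⟩
  have hinjA : ∀ A : Finset (ℕ × ℕ), A ⊆ grid → Set.InjOn f ↑A := by
    intro A hA p hp q hq h
    exact hinj p (hA hp) q (hA hq) h
  have hcard0 : A0.card = n := by
    have h1 := Finset.card_image_of_injOn (hinjA A0 (Finset.filter_subset _ _))
    rw [himg0, hcyc0, Finset.card_range] at h1
    omega
  have hcard1 : A1.card = n := by
    have h1 := Finset.card_image_of_injOn (hinjA A1 (Finset.filter_subset _ _))
    rw [himg1, hcyc1, Nat.card_Icc] at h1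
    omega
  have hg0 := hgood A0 (Finset.filter_subset _ _) hcard0
    ⟨0, by rw [hcard0]; exact himg0⟩
  have hg1 := hgood A1 (Finset.filter_subset _ _) hcard1
    ⟨1, by rw [hcard1]; exact himg1⟩
  simp only [genPerms, Finset.mem_filter, Finset.mem_powerset] at hg0 hg1
  obtain ⟨-, -, hrow0, hcol0⟩ := hg0
  obtain ⟨-, -, hrow1, hcol1⟩ := hg1
  -- the two special cells
  obtain ⟨p₀, hp₀g, hfp₀⟩ := hsurj 0 hm0
  obtain ⟨p₁, hp₁g, hfp₁⟩ := hsurj n hnm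
  have hp₀0 : p₀ ∈ A0 := Finset.mem_filter.2 ⟨hp₀g, by omega⟩
  have hp₁1 : p₁ ∈ A1 := Finset.mem_filter.2 ⟨hp₁g, by omega⟩
  have hp₁not0 : p₁ ∉ A0 := by
    intro h
    have := (Finset.mem_filter.1 h).2
    omega
  have hne : p₀ ≠ p₁ := by
    intro h
    rw [h] at hfp₀
    omega
  -- a member of A0 other than p₀ is in A1
  have hstep : ∀ q ∈ A0, q ≠ p₀ → q ∈ A1 := by
    intro q hq hqne
    obtain ⟨hqg, hqlt⟩ := Finset.mem_filter.1 hq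
    refine Finset.mem_filter.2 ⟨hqg, ?_, by omega⟩
    rcases Nat.eq_zero_or_pos (f q) with h0 | h0
    · exact absurd (hinj q hqg p₀ hp₀g (by omega)) hqne
    · omega
  -- first coordinates of A0 cover [n]
  have hIccfst : A0.image Prod.fst = Finset.Icc 1 n := by
    apply Finset.eq_of_subset_of_card_le
    · intro x hx
      obtain ⟨p, hp, rfl⟩ := Finset.mem_image.1 hx
      have := Finset.mem_product.1 ((Finset.filter_subset _ _) hp)
      exact this.1
    · rw [Nat.card_Icc, Finset.card_image_of_injOn
        (fun p hp q hq h => hrow0 p hp q hq h), hcard0]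
      omega
  have hIccsnd : A0.image Prod.snd = Finset.Icc 1 n := by
    apply Finset.eq_of_subset_of_card_le
    · intro x hx
      obtain ⟨p, hp, rfl⟩ := Finset.mem_image.1 hx
      have := Finset.mem_product.1 ((Finset.filter_subset _ _) hp)
      exact this.2
    · rw [Nat.card_Icc, Finset.card_image_of_injOn
        (fun p hp q hq h => hcol0 p hp q hq h), hcard0]
      omega
  have hp₁mem := Finset.mem_product.1 hp₁g
  -- p₀ and p₁ have the same first coordinate
  have hfst : p₀.1 = p₁.1 := by
    have : p₁.1 ∈ A0.image Prod.fst := by rw [hIccfst]; exact hp₁mem.1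
    obtain ⟨q, hq, hqfst⟩ := Finset.mem_image.1 this
    rcases eq_or_ne q p₀ with rfl | hqne
    · exact hqfst
    · exfalso
      have hq1 : q ∈ A1 := hstep q hq hqne
      have : q = p₁ := hrow1 q hq1 p₁ hp₁1 hqfst
      exact hp₁not0 (this ▸ hq)
  have hsnd : p₀.2 = p₁.2 := by
    have : p₁.2 ∈ A0.image Prod.snd := by rw [hIccsnd]; exact hp₁mem.2
    obtain ⟨q, hq, hqsnd⟩ := Finset.mem_image.1 this
    rcases eq_or_ne q p₀ with rfl | hqne
    · exact hqsnd
    · exfalso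
      have hq1 : q ∈ A1 := hstep q hq hqne
      have : q = p₁ := hcol1 q hq1 p₁ hp₁1 hqsnd
      exact hp₁not0 (this ▸ hq)
  exact hne (Prod.ext hfst hsnd)
end
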